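/- arXiv:1404.5497 — 2 statements merged into one kernel-verified Lean document; each statement's English description precedes it below -/
import Mathlib

section
/- For any prime number b and any positive integer k, the group of units of the quotient ring F_b[x]/(x^k) can be written as a direct product of at most k cyclic groups. -/
/-!
Write `Q = 𝔽_b[x]/(x^k)`. Evaluation at `0` maps `Qˣ` onto `𝔽_bˣ`, which is cyclic, and its
kernel `1 + xQ` is a `b`-group: in characteristic `b`, `(1 + xg)^(b^k) = 1 + x^(b^k) g^(b^k) = 1`.
Split the primary decomposition of `Qˣ` into its nontrivial `b`-primary cyclic factors and the
rest. The rest has order prime to `b`, so it meets the kernel trivially, embeds in `𝔽_bˣ` and is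
cyclic. If there are `m` factors of the first kind, then `b^m` divides `|Qˣ| < |Q| = b^k`, so
`m < k` and `Qˣ` is a product of `m + 1 ≤ k` cyclic groups.
-/

open Polynomial

namespace MulEquiv

def piCongrLeft' {α β : Type*} (M : α → Type*) [∀ a, Mul (M a)] (e : α ≃ β) :
    (∀ a, M a) ≃* ∀ b, M (e.symm b) :=
  { Equiv.piCongrLeft' M e with map_mul' _ _ := rfl }

def piFinSucc {n : ℕ} (M : Fin (n + 1) → Type*) [∀ i, Mul (M i)] :
    (∀ i, M i) ≃* M 0 × ∀ i : Fin n, M i.succ :=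
  { (Fin.consEquiv M).symm with map_mul' _ _ := rfl }

def piEquivPiSubtypeProd {ι : Type*} (P : ι → Prop) [DecidablePred P] (M : ι → Type*)
    [∀ i, Mul (M i)] : (∀ i, M i) ≃* (∀ i : {i // P i}, M i) × ∀ i : {i // ¬P i}, M i :=
  { Equiv.piEquivPiSubtypeProd P M with map_mul' _ _ := rfl }

end MulEquiv

theorem exists_mulEquiv_pi_fin_succ_zmod {G S : Type*} [Mul G] [Fintype S] {c : ℕ} {d : S → ℕ}
    (e : G ≃* Multiplicative (ZMod c) × ∀ s, Multiplicative (ZMod (d s))) :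
    ∃ d' : Fin (Fintype.card S + 1) → ℕ,
      Nonempty (G ≃* ∀ i, Multiplicative (ZMod (d' i))) := by
  let d' : Fin (Fintype.card S + 1) → ℕ := Fin.cons c (d ∘ (Fintype.equivFin S).symm)
  exact ⟨d', ⟨e.trans <| ((MulEquiv.refl _).prodCongr (MulEquiv.piCongrLeft' _ _)).trans
    (MulEquiv.piFinSucc fun i => Multiplicative (ZMod (d' i))).symm⟩⟩

theorem CommGroup.exists_mulEquiv_pi_zmod_prime_pow (G : Type*) [CommGroup G] [Finite G] :
    ∃ (ι : Type) (_ : Fintype ι) (q : ι → ℕ) (_ : ∀ i, (q i).Prime) (e : ι → ℕ),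
      Nonempty (G ≃* ∀ i, Multiplicative (ZMod (q i ^ e i))) := by
  obtain ⟨ι, hι, q, hq, e, ⟨E⟩⟩ := AddCommGroup.equiv_directSum_zmod_of_finite (Additive G)
  exact ⟨ι, hι, q, hq, e, ⟨MulEquiv.toAdditive.symm <| E.trans <|
    (DirectSum.addEquivProd _).trans (MulEquiv.piMultiplicative _).toAdditiveRight⟩⟩

theorem Nat.card_pi_multiplicative_zmod {ι : Type*} [Fintype ι] (d : ι → ℕ) :
    Nat.card (∀ i, Multiplicative (ZMod (d i))) = ∏ i, d i := by
  simp [Nat.card_pi, Nat.card_congr Multiplicative.toAdd]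

theorem isCyclic_of_coprime_card_of_ker_isPGroup {G H : Type*} [Group G] [Group H] [IsCyclic H]
    {p : ℕ} (φ : G →* H) (hφ : IsPGroup p φ.ker) (hG : (Nat.card G).Coprime p) : IsCyclic G := by
  refine isCyclic_of_injective φ ((injective_iff_map_eq_one φ).mpr fun g hg => ?_)
  obtain ⟨k, hk⟩ := hφ ⟨g, hg⟩
  have hgk : g ^ p ^ k = 1 := congrArg Subtype.val hk
  rw [← orderOf_eq_one_iff]
  exact Nat.Coprime.eq_one_of_dvd ((hG.pow_right k).coprime_dvd_left (orderOf_dvd_natCard g))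
    (orderOf_dvd_of_pow_eq_one hgk)

theorem CommGroup.exists_mulEquiv_pi_zmod_of_ker_isPGroup {G H : Type*} [CommGroup G] [Finite G]
    [Group H] [IsCyclic H] {p : ℕ} (hp : p.Prime) (φ : G →* H) (hφ : IsPGroup p φ.ker) :
    ∃ (n : ℕ) (d : Fin (n + 1) → ℕ),
      p ^ n ∣ Nat.card G ∧ Nonempty (G ≃* ∀ i, Multiplicative (ZMod (d i))) := by
  classical
  obtain ⟨ι, _, q, hq, e, ⟨E⟩⟩ := exists_mulEquiv_pi_zmod_prime_pow G
  let IsPPrimary : ι → Prop := fun i => q i = p ∧ e i ≠ 0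
  let C := ∀ i : {i // ¬IsPPrimary i}, Multiplicative (ZMod (q i ^ e i))
  let E' : G ≃* C × ∀ i : {i // IsPPrimary i}, Multiplicative (ZMod (q i ^ e i)) :=
    (E.trans (MulEquiv.piEquivPiSubtypeProd IsPPrimary _)).trans (MulEquiv.prodComm)
  have hC : (Nat.card C).Coprime p := by
    rw [show Nat.card C = ∏ i : {i // ¬IsPPrimary i}, q i ^ e i from
      Nat.card_pi_multiplicative_zmod _]
    refine Nat.Coprime.prod_left fun i _ => ?_
    by_cases he : e i = 0
    · simp [he]
    · exact ((Nat.coprime_primes (hq i) hp).mpr fun h => i.2 ⟨h, he⟩).pow_left _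
  let incl : C →* G := E'.symm.toMonoidHom.comp (MonoidHom.inl _ _)
  have hincl : Function.Injective incl :=
    E'.symm.injective.comp fun _ _ h => congrArg Prod.fst h
  have : IsCyclic C := isCyclic_of_coprime_card_of_ker_isPGroup (φ.comp incl)
    (by rw [← MonoidHom.comap_ker]; exact hφ.comap_of_injective incl hincl) hC
  obtain ⟨d, ⟨E''⟩⟩ := exists_mulEquiv_pi_fin_succ_zmod
    (E'.trans ((zmodCyclicMulEquiv this).symm.prodCongr (MulEquiv.refl _)))
  refine ⟨_, d, ?_, ⟨E''⟩⟩
  have hcard : Nat.card G = Nat.card C * ∏ i : {i // IsPPrimary i}, q i ^ e i := by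
    rw [Nat.card_congr E'.toEquiv, Nat.card_prod, Nat.card_pi_multiplicative_zmod,
      Nat.card_pi_multiplicative_zmod]
  calc p ^ Fintype.card {i // IsPPrimary i} = ∏ _i : {i // IsPPrimary i}, p := by simp
    _ ∣ ∏ i : {i // IsPPrimary i}, q i ^ e i :=
      Finset.prod_dvd_prod_of_dvd _ _ fun i _ => i.2.1 ▸ dvd_pow_self _ i.2.2
    _ ∣ Nat.card G := hcard ▸ dvd_mul_left _ _

namespace Polynomial

variable {R : Type*} [CommRing R] {k : ℕ}

noncomputable def quotSpanXPowConstantCoeff (hk : k ≠ 0) :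
    R[X] ⧸ Ideal.span {(X : R[X]) ^ k} →+* R :=
  Ideal.Quotient.lift _ constantCoeff fun a ha => by
    obtain ⟨c, rfl⟩ := Ideal.mem_span_singleton.mp ha
    simp [hk.symm]

theorem pow_char_pow_eq_one_of_quotSpanXPowConstantCoeff_eq_one {p : ℕ} [Fact p.Prime]
    [CharP R p] (hk : k ≠ 0) {q : R[X] ⧸ Ideal.span {(X : R[X]) ^ k}}
    (hq : quotSpanXPowConstantCoeff hk q = 1) : q ^ p ^ k = 1 := by
  obtain ⟨f, rfl⟩ := Ideal.Quotient.mk_surjective q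
  have hXf : X ∣ f - 1 := by
    rw [X_dvd_iff, ← constantCoeff_apply, map_sub, map_one, sub_eq_zero]
    exact hq
  have hk_le : k ≤ p ^ k := (Nat.lt_pow_self (Fact.out : p.Prime).one_lt).le
  rw [← map_pow, ← map_one (Ideal.Quotient.mk _), Ideal.Quotient.eq, Ideal.mem_span_singleton,
    ← one_pow (p ^ k), ← sub_pow_char_pow]
  exact (pow_dvd_pow X hk_le).trans (pow_dvd_pow_of_dvd hXf _)

variable {K : Type*} [Field K] {f : K[X]}

theorem finite_quotient_span_singleton [Finite K] (hf : f ≠ 0) :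
    Finite (K[X] ⧸ Ideal.span {f}) :=
  have : Module.Finite K (K[X] ⧸ Ideal.span {f}) := (AdjoinRoot.powerBasis hf).finite
  Module.finite_of_finite K

theorem natCard_quotient_span_singleton (hf : f ≠ 0) :
    Nat.card (K[X] ⧸ Ideal.span {f}) = Nat.card K ^ f.natDegree := by
  have : Module.Finite K (K[X] ⧸ Ideal.span {f}) := (AdjoinRoot.powerBasis hf).finite
  rw [Module.natCard_eq_pow_finrank (K := K), finrank_quotient_span_eq_natDegree]

end Polynomial

/-- For any prime `b` and positive integer `k`, the group of units of
`F_b[x]/(x^k)` is isomorphic to a direct product of at most `k` cyclic groups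
(each a cyclic group `Multiplicative (ZMod (d i))`). -/
theorem stmt0 (b k : ℕ) (hb : b.Prime) (hk : 0 < k) :
    ∃ (n : ℕ) (d : Fin n → ℕ), n ≤ k ∧
      Nonempty ((Polynomial (ZMod b) ⧸ Ideal.span {(Polynomial.X : Polynomial (ZMod b)) ^ k})ˣ
        ≃* ((i : Fin n) → Multiplicative (ZMod (d i)))) := by
  have := Fact.mk hb
  have hXk : (X : (ZMod b)[X]) ^ k ≠ 0 := pow_ne_zero _ X_ne_zero
  have := finite_quotient_span_singleton hXk
  have := (quotSpanXPowConstantCoeff (R := ZMod b) hk.ne').domain_nontrivial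
  obtain ⟨n, d, hdvd, hE⟩ := CommGroup.exists_mulEquiv_pi_zmod_of_ker_isPGroup
    (G := ((ZMod b)[X] ⧸ Ideal.span {(X : (ZMod b)[X]) ^ k})ˣ) hb
    (Units.map (quotSpanXPowConstantCoeff hk.ne').toMonoidHom) fun u =>
      ⟨k, Subtype.ext <| Units.ext <|
        pow_char_pow_eq_one_of_quotSpanXPowConstantCoeff_eq_one hk.ne' (congrArg Units.val u.2)⟩
  refine ⟨n + 1, d, ?_, hE⟩
  have hcard : Nat.card ((ZMod b)[X] ⧸ Ideal.span {(X : (ZMod b)[X]) ^ k}) = b ^ k := by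
    rw [natCard_quotient_span_singleton hXk, Nat.card_zmod, natDegree_X_pow]
  exact (Nat.pow_lt_pow_iff_right hb.one_lt).mp <|
    (Nat.le_of_dvd Nat.card_pos hdvd).trans_lt (hcard ▸ natCard_units_lt _)
end

section
/- Let N ∈ ℕ, z = (z_1,...,z_s) ∈ ℤ^s, and α > 1. Then ∑_{h ∈ D} ∏_{j=1}^s ρ'_{α,γ_j}(h_j) = -1 + (1/N) ∑_{n=0}^{N-1} ∏_{j=1}^s [1 + γ_j ∑_{h ∈ ℤ\{0}} exp(2πi h z_j n / N)/|h|^α], where D = {h ∈ ℤ^s \ {0} : h·z ≡ 0 (mod N)}. -/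
/-!
Write each factor on the right as a full sum `∑_{h ∈ ℤ} ρ'(h) e(h z_j n / N)`. By absolute
convergence the product of these `s` sums is a single sum over `h ∈ ℤ^s` with phase
`e((h·z) n / N)`, and averaging over `n` with the character sum keeps exactly the `h` with
`N ∣ h·z`. Of these, `h = 0` has weight `1`, which accounts for the `-1`.
-/

open Complex Finset Real

theorem sum_range_exp_two_pi_I_mul_div {N : ℕ} (hN : N ≠ 0) (k : ℤ) :
    ∑ n ∈ range N, exp (2 * π * I * k * n / N) = if (N : ℤ) ∣ k then (N : ℂ) else 0 := by
  set ω := exp (2 * π * I / N)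
  have hω : IsPrimitiveRoot ω N := isPrimitiveRoot_exp N hN
  have hterm : ∀ n : ℕ, exp (2 * π * I * k * n / N) = (ω ^ k) ^ n := by
    intro n
    rw [← Complex.exp_int_mul, ← Complex.exp_nat_mul]
    ring_nf
  simp_rw [hterm]
  split_ifs with hk
  · simp [(hω.zpow_eq_one_iff_dvd k).2 hk]
  · rw [geom_sum_eq (mt (hω.zpow_eq_one_iff_dvd k).1 hk), ← zpow_natCast, ← zpow_mul, mul_comm k,
      zpow_mul, zpow_natCast, hω.pow_eq_one, one_zpow, sub_self, zero_div]

theorem norm_exp_two_pi_I_mul_div (h z : ℤ) (n N : ℕ) :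
    ‖exp (2 * π * I * h * z * n / N)‖ = 1 := by
  simp [norm_exp]

section SplitOffTerm

variable {β G : Type*} [AddCommGroup G] [UniformSpace G] [IsUniformAddGroup G] [CompleteSpace G]
  [T2Space G] {f : β → G}

theorem Summable.tsum_eq_add_tsum_ne (hf : Summable f) (a : β) :
    ∑' x, f x = f a + ∑' x : {x // x ≠ a}, f x := by
  rw [← hf.tsum_subtype_add_tsum_subtype_compl {a}, tsum_singleton]
  rfl

theorem Summable.tsum_subtype_eq_add_tsum_subtype_ne (hf : Summable f) {p : β → Prop} {a : β}
    (ha : p a) : ∑' x : {x // p x}, f x = f a + ∑' x : {x // x ≠ a ∧ p x}, f x := by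
  have hs : {x | p x} = {a} ∪ {x | x ≠ a ∧ p x} := by
    ext x
    by_cases hx : x = a <;> simp [hx, ha]
  change ∑' x : ({x | p x} : Set β), f x = _
  rw [hs, (hf.subtype _).tsum_union_disjoint (by simp) (hf.subtype _), tsum_singleton]
  rfl

end SplitOffTerm

section PiProduct

variable {R β : Type*} [NormedCommRing R]

theorem summable_norm_prod_pi : ∀ {n : ℕ} {f : Fin n → β → R},
    (∀ i, Summable fun b => ‖f i b‖) → Summable fun x : Fin n → β => ‖∏ i, f i (x i)‖
  | 0, _, _ => .of_finite
  | n + 1, f, hf => by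
    rw [← (Fin.consEquiv fun _ => β).summable_iff]
    simpa [Fin.consEquiv, Fin.prod_univ_succ, Function.comp_def] using
      (hf 0).mul_norm (summable_norm_prod_pi (f := fun i => f i.succ) fun i => hf i.succ)

theorem tsum_prod_pi_eq_prod_tsum [CompleteSpace R] : ∀ {n : ℕ} {f : Fin n → β → R},
    (∀ i, Summable fun b => ‖f i b‖) → ∑' x : Fin n → β, ∏ i, f i (x i) = ∏ i, ∑' b, f i b
  | 0, _, _ => by simp
  | n + 1, f, hf => by
    rw [← (Fin.consEquiv fun _ => β).tsum_eq, Fin.prod_univ_succ,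
      ← tsum_prod_pi_eq_prod_tsum (f := fun i => f i.succ) fun i => hf i.succ,
      tsum_mul_tsum_of_summable_norm (hf 0) (summable_norm_prod_pi fun i => hf i.succ)]
    simp [Fin.consEquiv, Fin.prod_univ_succ]

end PiProduct

theorem tsum_dual_lattice_eq_average {s N : ℕ} (hN : N ≠ 0) (z : Fin s → ℤ)
    {w : Fin s → ℤ → ℂ} (hw : ∀ j, Summable fun h => ‖w j h‖) :
    ∑' h : {h : Fin s → ℤ // (N : ℤ) ∣ ∑ j, h j * z j}, ∏ j, w j (h.1 j)
      = 1 / N * ∑ n ∈ range N, ∏ j, ∑' h : ℤ, w j h * exp (2 * π * I * h * z j * n / N) := by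
  have hnorm : ∀ (n : ℕ) j, Summable fun h : ℤ => ‖w j h * exp (2 * π * I * h * z j * n / N)‖ :=
    fun n j => by simpa [norm_exp_two_pi_I_mul_div] using hw j
  have hphase : ∀ (n : ℕ) (h : Fin s → ℤ), ∏ j, w j (h j) * exp (2 * π * I * h j * z j * n / N)
      = (∏ j, w j (h j)) * exp (2 * π * I * ((∑ j, h j * z j : ℤ) : ℂ) * n / N) := by
    intro n h
    rw [prod_mul_distrib, ← Complex.exp_sum]
    push_cast
    rw [mul_sum, sum_mul, sum_div]
    simp only [mul_assoc]
  calc ∑' h : {h : Fin s → ℤ // (N : ℤ) ∣ ∑ j, h j * z j}, ∏ j, w j (h.1 j)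
      = ∑' h : Fin s → ℤ,
          1 / N * ∑ n ∈ range N, ∏ j, w j (h j) * exp (2 * π * I * h j * z j * n / N) := by
        refine (tsum_subtype {h : Fin s → ℤ | (N : ℤ) ∣ ∑ j, h j * z j}
          fun h => ∏ j, w j (h j)).trans (tsum_congr fun h => ?_)
        simp only [hphase, ← mul_sum, sum_range_exp_two_pi_I_mul_div hN, Set.indicator_apply,
          Set.mem_ofPred_eq]
        split_ifs
        · field_simp
        · simp
    _ = _ := by
        rw [tsum_mul_left,
          Summable.tsum_finsetSum fun n _ => (summable_norm_prod_pi (hnorm n)).of_norm]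
        simp only [tsum_prod_pi_eq_prod_tsum (hnorm _)]

noncomputable def rhoPrime (α γ : ℝ) (h : ℤ) : ℝ := if h = 0 then 1 else γ * |(h : ℝ)| ^ (-α)

theorem summable_norm_rhoPrime {α : ℝ} (hα : 1 < α) (γ : ℝ) :
    Summable fun h : ℤ => ‖(rhoPrime α γ h : ℂ)‖ := by
  have : Summable (rhoPrime α γ) :=
    (((Real.summable_abs_int_rpow hα).mul_left γ).update 0 1).congr fun h => by
      by_cases hh : h = 0 <;> simp [rhoPrime, hh]
  simpa using this.abs

theorem tsum_rhoPrime_mul {α : ℝ} (hα : 1 < α) (γ : ℝ) {c : ℤ → ℂ} (hc : ∀ h, ‖c h‖ ≤ 1) :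
    ∑' h, (rhoPrime α γ h : ℂ) * c h
      = c 0 + γ * ∑' h : {h : ℤ // h ≠ 0}, c h / (|(h : ℝ)| ^ α : ℝ) := by
  have hsum : Summable fun h => (rhoPrime α γ h : ℂ) * c h :=
    .of_norm_bounded (summable_norm_rhoPrime hα γ) fun h => by
      rw [norm_mul]
      exact mul_le_of_le_one_right (norm_nonneg _) (hc h)
  rw [hsum.tsum_eq_add_tsum_ne 0, ← tsum_mul_left]
  congr 1
  · simp [rhoPrime]
  · refine tsum_congr fun ⟨h, hh⟩ => ?_
    simp only [rhoPrime, hh, ↓reduceIte, abs_nonneg, rpow_neg, ofReal_mul, ofReal_inv,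
      div_eq_mul_inv]
    ring

theorem stmt7_general (N s : ℕ) (hN : 1 ≤ N) (z : Fin s → ℤ)
    (α : ℝ) (hα : 1 < α) (γ : Fin s → ℝ) :
    ((∑' h : {h : Fin s → ℤ // h ≠ 0 ∧ (N : ℤ) ∣ ∑ j, h j * z j},
        ∏ j, (if h.1 j = 0 then 1 else γ j * |((h.1 j : ℤ) : ℝ)| ^ (-α)) : ℝ) : ℂ)
      = -1 + (1 / (N : ℂ)) * ∑ n ∈ Finset.range N, ∏ j,
          (1 + (γ j : ℂ) * ∑' h : {h : ℤ // h ≠ 0},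
            Complex.exp (2 * Real.pi * Complex.I * ((h : ℤ) : ℂ) * (z j : ℂ) * (n : ℂ) / (N : ℂ))
              / ((|((h : ℤ) : ℝ)| : ℝ) ^ α : ℝ)) := by
  have hw : ∀ j, Summable fun h => ‖(rhoPrime α (γ j) h : ℂ)‖ :=
    fun j => summable_norm_rhoPrime hα (γ j)
  have hfactor : ∀ (n : ℕ) j, 1 + (γ j : ℂ) * ∑' h : {h : ℤ // h ≠ 0},
      exp (2 * π * I * (h : ℤ) * z j * n / N) / (|((h : ℤ) : ℝ)| ^ α : ℝ)
        = ∑' h : ℤ, (rhoPrime α (γ j) h : ℂ) * exp (2 * π * I * h * z j * n / N) := by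
    intro n j
    rw [tsum_rhoPrime_mul hα _ fun h => (norm_exp_two_pi_I_mul_div h (z j) n N).le]
    simp
  have hsum : Summable fun h : Fin s → ℤ => ∏ j, (rhoPrime α (γ j) (h j) : ℂ) :=
    (summable_norm_prod_pi hw).of_norm
  simp only [hfactor, ← tsum_dual_lattice_eq_average (by omega : N ≠ 0) z hw]
  rw [hsum.tsum_subtype_eq_add_tsum_subtype_ne (p := fun h => (N : ℤ) ∣ ∑ j, h j * z j)
    (a := 0) (by simp)]
  simp [Complex.ofReal_tsum, rhoPrime]

/-- Worst-case error identity for product weights: with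
`ρ'_{α,γ}(0) = 1`, `ρ'_{α,γ}(h) = γ|h|^(-α)` for `h ≠ 0`, and
`D = {h ∈ ℤ^s \ {0} : h·z ≡ 0 (mod N)}`, one has
`∑_{h ∈ D} ∏_j ρ'_{α,γ_j}(h_j)
  = -1 + (1/N) ∑_{n=0}^{N-1} ∏_j [1 + γ_j ∑_{h≠0} exp(2πi h z_j n/N)/|h|^α]`. -/
theorem stmt7 (N s : ℕ) (hN : 1 ≤ N) (hs : 1 ≤ s) (z : Fin s → ℤ)
    (α : ℝ) (hα : 1 < α) (γ : Fin s → ℝ) (hγ : ∀ j, 0 < γ j) :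
    ((∑' h : {h : Fin s → ℤ // h ≠ 0 ∧ (N : ℤ) ∣ ∑ j, h j * z j},
        ∏ j, (if h.1 j = 0 then 1 else γ j * |((h.1 j : ℤ) : ℝ)| ^ (-α)) : ℝ) : ℂ)
      = -1 + (1 / (N : ℂ)) * ∑ n ∈ Finset.range N, ∏ j,
          (1 + (γ j : ℂ) * ∑' h : {h : ℤ // h ≠ 0},
            Complex.exp (2 * Real.pi * Complex.I * ((h : ℤ) : ℂ) * (z j : ℂ) * (n : ℂ) / (N : ℂ))
              / ((|((h : ℤ) : ℝ)| : ℝ) ^ α : ℝ)) :=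
  stmt7_general N s hN z α hα γ
end
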